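/- For all real numbers β, η with 0 < β < 1 and 0 < η < 1, the integral ∫₀^η dv / ((1-v) v^β) is comparable to η^{1-β}/(1-β) + log(1/(1-η)), with implied constants independent of β and η. That is, there exist absolute constants c, C > 0 such that c·(η^{1-β}/(1-β) + log(1/(1-η))) ≤ ∫₀^η dv/((1-v)v^β) ≤ C·(η^{1-β}/(1-β) + log(1/(1-η))). -/

import Mathlib

open MeasureTheory Real

/-! On `(0, 1)` the integrand `1 / ((1 - v) v ^ β)` dominates both `v ^ (-β)` and `1 / (1 - v)`,
and it is at most their sum because `1 ≤ (1 - v) + v ^ β`. The two integrals of these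
comparison functions over `(0, η)` are exactly `η ^ (1 - β) / (1 - β)` and `log (1 / (1 - η))`,
so the theorem holds with `c = 1 / 2` and `C = 1`. -/

section PointwiseBounds

variable {β v : ℝ}

lemma rpow_neg_le_one_div_one_sub_mul_rpow (hv₀ : 0 < v) (hv₁ : v < 1) :
    v ^ (-β) ≤ 1 / ((1 - v) * v ^ β) := by
  have hvβ : 0 < v ^ β := rpow_pos_of_pos hv₀ β
  rw [rpow_neg hv₀.le, ← one_div]
  exact one_div_le_one_div_of_le (mul_pos (by linarith) hvβ) (mul_le_of_le_one_left hvβ.le (by linarith))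

lemma one_div_one_sub_le_one_div_one_sub_mul_rpow (hβ : 0 ≤ β) (hv₀ : 0 < v) (hv₁ : v < 1) :
    1 / (1 - v) ≤ 1 / ((1 - v) * v ^ β) :=
  one_div_le_one_div_of_le (mul_pos (by linarith) (rpow_pos_of_pos hv₀ β))
    (mul_le_of_le_one_right (by linarith) (rpow_le_one hv₀.le hv₁.le hβ))

lemma one_div_one_sub_mul_rpow_le_add (hβ : β ≤ 1) (hv₀ : 0 < v) (hv₁ : v < 1) :
    1 / ((1 - v) * v ^ β) ≤ v ^ (-β) + 1 / (1 - v) := by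
  have hvβ : 0 < v ^ β := rpow_pos_of_pos hv₀ β
  have h1v : 0 < 1 - v := by linarith
  have hv_le : v ≤ v ^ β := by
    simpa using rpow_le_rpow_of_exponent_ge hv₀ hv₁.le hβ
  rw [rpow_neg hv₀.le, ← one_div, div_add_div _ _ hvβ.ne' h1v.ne', mul_comm (v ^ β) (1 - v)]
  gcongr ?_ / _
  linarith

end PointwiseBounds

section Integrals

variable {β η : ℝ}

lemma integrableOn_Ioo_one_div_one_sub (hη : η < 1) :
    IntegrableOn (fun v : ℝ => 1 / (1 - v)) (Set.Ioo 0 η) := by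
  refine (ContinuousOn.integrableOn_Icc ?_).mono_set Set.Ioo_subset_Icc_self
  refine continuousOn_const.div (by fun_prop) fun v hv => ?_
  linarith [hv.2]

lemma integral_Ioo_rpow_neg (hβ : β < 1) (hη : 0 ≤ η) :
    ∫ v in Set.Ioo 0 η, v ^ (-β) = η ^ (1 - β) / (1 - β) := by
  rw [← integral_Ioc_eq_integral_Ioo, ← intervalIntegral.integral_of_le hη,
    integral_rpow (Or.inl (by linarith)), zero_rpow (by linarith), sub_zero, neg_add_eq_sub]

lemma integral_Ioo_one_div_one_sub (hη₀ : 0 ≤ η) (hη₁ : η < 1) :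
    ∫ v in Set.Ioo 0 η, 1 / (1 - v) = log (1 / (1 - η)) := by
  rw [← integral_Ioc_eq_integral_Ioo, ← intervalIntegral.integral_of_le hη₀,
    intervalIntegral.integral_comp_sub_left (fun u : ℝ => 1 / u), sub_zero, integral_one_div]
  rw [Set.uIcc_of_le (by linarith)]
  exact fun h => by linarith [h.1]

lemma integrableOn_Ioo_one_div_one_sub_mul_rpow (hβ : β < 1) (hη₀ : 0 < η) (hη₁ : η < 1) :
    IntegrableOn (fun v : ℝ => 1 / ((1 - v) * v ^ β)) (Set.Ioo 0 η) := by
  have hsum := ((intervalIntegral.integrableOn_Ioo_rpow_iff hη₀).2 (by linarith : -1 < -β)).add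
    (integrableOn_Ioo_one_div_one_sub hη₁)
  refine hsum.mono' (Measurable.aestronglyMeasurable (by fun_prop)) ((ae_restrict_iff' measurableSet_Ioo).2 ?_)
  filter_upwards with v ⟨hv₀, hvη⟩
  have hvβ : 0 < v ^ β := rpow_pos_of_pos hv₀ β
  rw [norm_of_nonneg (one_div_nonneg.2 (mul_nonneg (by linarith) hvβ.le))]
  exact one_div_one_sub_mul_rpow_le_add hβ.le hv₀ (by linarith)

end Integrals

theorem integral_one_div_one_sub_mul_rpow_comparable :
    ∃ c C : ℝ, 0 < c ∧ 0 < C ∧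
      ∀ β η : ℝ, 0 < β → β < 1 → 0 < η → η < 1 →
        c * (η ^ (1 - β) / (1 - β) + Real.log (1 / (1 - η))) ≤
            ∫ v in Set.Ioo (0 : ℝ) η, 1 / ((1 - v) * v ^ β) ∧
        (∫ v in Set.Ioo (0 : ℝ) η, 1 / ((1 - v) * v ^ β)) ≤
            C * (η ^ (1 - β) / (1 - β) + Real.log (1 / (1 - η))) := by
  refine ⟨1 / 2, 1, by norm_num, one_pos, fun β η hβ₀ hβ₁ hη₀ hη₁ => ?_⟩
  have hf := integrableOn_Ioo_one_div_one_sub_mul_rpow hβ₁ hη₀ hη₁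
  have hg := (intervalIntegral.integrableOn_Ioo_rpow_iff hη₀).2 (by linarith : -1 < -β)
  have hh := integrableOn_Ioo_one_div_one_sub hη₁
  have hv₁ : ∀ v ∈ Set.Ioo 0 η, v < 1 := fun v hv => hv.2.trans hη₁
  have hg_le := setIntegral_mono_on hg hf measurableSet_Ioo fun v hv =>
    rpow_neg_le_one_div_one_sub_mul_rpow (β := β) hv.1 (hv₁ v hv)
  have hh_le := setIntegral_mono_on hh hf measurableSet_Ioo fun v hv =>
    one_div_one_sub_le_one_div_one_sub_mul_rpow hβ₀.le hv.1 (hv₁ v hv)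
  have hle_add : ∫ v in Set.Ioo 0 η, 1 / ((1 - v) * v ^ β) ≤
      ∫ v in Set.Ioo 0 η, (v ^ (-β) + 1 / (1 - v)) := setIntegral_mono_on hf (hg.add hh) measurableSet_Ioo fun v hv =>
    one_div_one_sub_mul_rpow_le_add hβ₁.le hv.1 (hv₁ v hv)
  rw [integral_add hg hh] at hle_add
  rw [integral_Ioo_rpow_neg hβ₁ hη₀.le] at hg_le hle_add
  rw [integral_Ioo_one_div_one_sub hη₀.le hη₁] at hh_le hle_add
  constructor <;> linarith
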